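/- arXiv:1206.5122 — 2 statements merged into one kernel-verified Lean document; each statement's English description precedes it below -/
import Mathlib

section
/- For a complex number a with Re(a) > 0 and any real ξ, ∫_{-∞}^{∞} Γ(a + it) Γ(a - it) e^{-iξt} dt = 2π Γ(2a) / (4^a cosh^{2a}(ξ/2)). -/
/-!
The substitution `u = σ ξ`, with `σ` the logistic function, turns Euler's Beta integral into
`B(c, d) = ∫ σ(ξ)^c σ(-ξ)^d dξ`. For `c = a - 2πis`, `d = a + 2πis` this says that
`s ↦ Γ(a + 2πis) Γ(a - 2πis) / Γ(2a)` is the Fourier transform of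
`g(ξ) = (σ(ξ) σ(-ξ))^a = (2 cosh (ξ/2))^(-2a)`. As `g`, `g'`, `g''` are integrable, `𝓕 g`
decays like `1/s²`, so Fourier inversion applies to the even function `g`; the substitution
`t = 2πs` then gives the formula.
-/

open Complex Real MeasureTheory
open Set
open scoped FourierTransform

section Fourier

variable {E : Type*} [NormedAddCommGroup E] [NormedSpace ℂ E] {f f' f'' : ℝ → E}

theorem Real.fourier_deriv_of_hasDerivAt (hf : ∀ x, HasDerivAt f (f' x) x) (hf_int : Integrable f)
    (hf'_int : Integrable f') (x : ℝ) : 𝓕 f' x = (2 * π * I * x) • 𝓕 f x := by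
  have hderiv : deriv f = f' := funext fun x => (hf x).deriv
  rw [← hderiv, Real.fourier_deriv hf_int (fun x => (hf x).differentiableAt) (hderiv ▸ hf'_int)]

theorem Real.integrable_fourier_of_hasDerivAt_two (hf : ∀ x, HasDerivAt f (f' x) x)
    (hf' : ∀ x, HasDerivAt f' (f'' x) x) (hf_int : Integrable f) (hf'_int : Integrable f')
    (hf''_int : Integrable f'') : Integrable (𝓕 f) := by
  set C₀ := ∫ x, ‖f x‖
  set C₂ := ∫ x, ‖f'' x‖
  have hbound (x : ℝ) : ‖𝓕 f x‖ ≤ (C₀ + C₂) * (1 + x ^ 2)⁻¹ := by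
    have h₀ : ‖𝓕 f x‖ ≤ C₀ := VectorFourier.norm_fourierIntegral_le_integral_norm _ _ _ _ _
    have h₂ : (2 * π * |x|) ^ 2 * ‖𝓕 f x‖ ≤ C₂ := by
      have h : ‖𝓕 f'' x‖ ≤ C₂ := VectorFourier.norm_fourierIntegral_le_integral_norm _ _ _ _ _
      rw [Real.fourier_deriv_of_hasDerivAt hf' hf'_int hf''_int,
        Real.fourier_deriv_of_hasDerivAt hf hf_int hf'_int, smul_smul, norm_smul] at h
      convert h using 2
      simp only [Complex.norm_mul, Complex.norm_ofNat, norm_real, norm_eq_abs, abs_of_pos pi_pos,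
        norm_I, mul_one]
      ring
    have hx : x ^ 2 ≤ (2 * π * |x|) ^ 2 := by
      have hπ : 1 ≤ (2 * π) ^ 2 := by nlinarith [pi_gt_three]
      rw [mul_pow, sq_abs]
      nlinarith [mul_le_mul_of_nonneg_right hπ (sq_nonneg x)]
    rw [← div_eq_mul_inv, le_div_iff₀ (by positivity)]
    nlinarith [mul_le_mul_of_nonneg_right hx (norm_nonneg (𝓕 f x))]
  refine (integrable_inv_one_add_sq.const_mul (C₀ + C₂)).mono' ?_ (ae_of_all _ hbound)
  exact (VectorFourier.fourierIntegral_continuous Real.continuous_fourierChar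
    (by exact continuous_inner) hf_int).aestronglyMeasurable

end Fourier

namespace Real

lemma log_sigmoid_neg (x : ℝ) : log (sigmoid (-x)) = log (sigmoid x) - x := by
  rw [← sigmoid_mul_rexp_neg, log_mul (sigmoid_pos x).ne' (exp_pos _).ne', log_exp, sub_eq_add_neg]

lemma log_sigmoid_add_log_sigmoid_neg_le (x : ℝ) :
    log (sigmoid x) + log (sigmoid (-x)) ≤ -|x| := by
  have h₁ : log (sigmoid x) ≤ 0 := log_nonpos (sigmoid_pos x).le (sigmoid_le_one x)
  have h₂ : log (sigmoid (-x)) ≤ 0 := log_nonpos (sigmoid_pos _).le (sigmoid_le_one _)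
  rw [log_sigmoid_neg] at h₂ ⊢
  cases abs_cases x <;> linarith

lemma hasDerivAt_log_sigmoid_add_log_sigmoid_neg (x : ℝ) :
    HasDerivAt (fun x => log (sigmoid x) + log (sigmoid (-x))) (1 - 2 * sigmoid x) x := by
  have h₁ := (hasDerivAt_sigmoid x).log (sigmoid_pos x).ne'
  have h₂ := ((hasDerivAt_sigmoid (-x)).comp x (hasDerivAt_neg x)).log (sigmoid_pos (-x)).ne'
  refine (h₁.add h₂).congr_deriv ?_
  simp only [Function.comp_apply, sigmoid_neg]
  have h₀ : 1 - sigmoid x ≠ 0 := sub_ne_zero.2 (sigmoid_lt_one x).ne'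
  field_simp [(sigmoid_pos x).ne']
  ring

lemma integrable_exp_neg_mul_abs {b : ℝ} (hb : 0 < b) :
    Integrable fun x : ℝ => exp (-b * |x|) := by
  rw [← integrableOn_univ, ← Iic_union_Ioi (a := 0), integrableOn_union]
  constructor
  · refine (integrableOn_exp_mul_Iic hb 0).congr_fun (fun x hx => ?_) measurableSet_Iic
    rw [abs_of_nonpos hx, mul_neg, neg_mul, neg_neg]
  · refine (integrableOn_exp_mul_Ioi (neg_lt_zero.2 hb) 0).congr_fun (fun x hx => ?_)
      measurableSet_Ioi
    rw [abs_of_pos hx]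

lemma abs_one_sub_two_mul_sigmoid_le (x : ℝ) : |1 - 2 * sigmoid x| ≤ 1 := by
  rw [abs_le]
  constructor <;> linarith [sigmoid_pos x, sigmoid_lt_one x]

lemma sigmoid_mul_sigmoid_neg (x : ℝ) :
    sigmoid x * sigmoid (-x) = (4 * cosh (x / 2) ^ 2)⁻¹ := by
  have hx : rexp x = rexp (x / 2) ^ 2 := by rw [← Real.exp_nat_mul]; ring_nf
  have hx' : rexp (-x) = rexp (-(x / 2)) ^ 2 := by rw [← Real.exp_nat_mul]; ring_nf
  have hprod : rexp (x / 2) * rexp (-(x / 2)) = 1 := by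
    rw [← Real.exp_add, add_neg_cancel, exp_zero]
  rw [sigmoid_def, sigmoid_def, ← mul_inv, cosh_eq, neg_neg, hx, hx']
  congr 1
  linear_combination (rexp (x / 2) * rexp (-(x / 2)) - 1) * hprod

end Real

lemma Complex.ofReal_cpow_eq_exp {x : ℝ} (hx : 0 < x) (w : ℂ) :
    (x : ℂ) ^ w = cexp (Real.log x * w) := by
  rw [cpow_def_of_ne_zero (ofReal_ne_zero.2 hx.ne'), ofReal_log hx.le]

theorem Complex.betaIntegral_eq_integral_sigmoid (u v : ℂ) :
    betaIntegral u v = ∫ x : ℝ, (sigmoid x : ℂ) ^ u * (sigmoid (-x) : ℂ) ^ v := by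
  rw [betaIntegral, intervalIntegral.integral_of_le zero_le_one, integral_Ioc_eq_integral_Ioo,
    ← range_sigmoid, ← image_univ, integral_image_eq_integral_abs_deriv_smul MeasurableSet.univ
      (fun x _ => (hasDerivAt_sigmoid x).hasDerivWithinAt) sigmoid_injective.injOn,
    setIntegral_univ]
  congr 1 with x
  have hσ : (sigmoid x : ℂ) ≠ 0 := ofReal_ne_zero.2 (sigmoid_pos x).ne'
  have hσ' : (sigmoid (-x) : ℂ) ≠ 0 := ofReal_ne_zero.2 (sigmoid_pos (-x)).ne'
  have h_one_sub : 1 - (sigmoid x : ℂ) = sigmoid (-x) := by simp [sigmoid_neg]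
  -- the Jacobian `σ (1 - σ) = σ(x) σ(-x)` absorbs the `- 1` in both exponents
  rw [← sigmoid_neg, abs_of_pos (mul_pos (sigmoid_pos x) (sigmoid_pos (-x))), real_smul,
    h_one_sub, cpow_sub _ _ hσ, cpow_sub _ _ hσ', cpow_one, cpow_one]
  push_cast
  field_simp

noncomputable def sigmoidKernel (a : ℂ) (x : ℝ) : ℂ := (sigmoid x : ℂ) ^ a * (sigmoid (-x) : ℂ) ^ a

lemma sigmoidKernel_neg (a : ℂ) (x : ℝ) : sigmoidKernel a (-x) = sigmoidKernel a x := by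
  rw [sigmoidKernel, sigmoidKernel, neg_neg, mul_comm]

lemma sigmoidKernel_eq_exp (a : ℂ) (x : ℝ) :
    sigmoidKernel a x = cexp (a * ↑(Real.log (sigmoid x) + Real.log (sigmoid (-x)))) := by
  rw [sigmoidKernel, ofReal_cpow_eq_exp (sigmoid_pos x), ofReal_cpow_eq_exp (sigmoid_pos (-x)),
    ← Complex.exp_add]
  push_cast
  ring_nf

lemma hasDerivAt_sigmoidKernel (a : ℂ) (x : ℝ) :
    HasDerivAt (sigmoidKernel a) (a * ↑(1 - 2 * sigmoid x) * sigmoidKernel a x) x := by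
  rw [funext (sigmoidKernel_eq_exp a)]
  exact ((hasDerivAt_log_sigmoid_add_log_sigmoid_neg x).ofReal_comp.const_mul a).cexp.congr_deriv
    (mul_comm _ _)

lemma hasDerivAt_deriv_sigmoidKernel (a : ℂ) (x : ℝ) :
    HasDerivAt (fun x => a * ↑(1 - 2 * sigmoid x) * sigmoidKernel a x)
      ((a ^ 2 * (((1 - 2 * sigmoid x) ^ 2 : ℝ) : ℂ) - a * ↑(2 * (sigmoid x * (1 - sigmoid x)))) *
        sigmoidKernel a x) x := by
  have h := ((((hasDerivAt_sigmoid x).const_mul 2).const_sub 1).ofReal_comp.const_mul a).mul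
    (hasDerivAt_sigmoidKernel a x)
  refine h.congr_deriv ?_
  push_cast
  ring

lemma continuous_sigmoidKernel (a : ℂ) : Continuous (sigmoidKernel a) :=
  continuous_iff_continuousAt.2 fun x => (hasDerivAt_sigmoidKernel a x).continuousAt

lemma norm_sigmoidKernel_le {a : ℂ} (ha : 0 ≤ a.re) (x : ℝ) :
    ‖sigmoidKernel a x‖ ≤ rexp (-a.re * |x|) := by
  rw [sigmoidKernel_eq_exp, norm_exp, re_mul_ofReal, neg_mul, ← mul_neg]
  exact Real.exp_le_exp.2 (mul_le_mul_of_nonneg_left (log_sigmoid_add_log_sigmoid_neg_le x) ha)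

lemma integrable_sigmoidKernel {a : ℂ} (ha : 0 < a.re) : Integrable (sigmoidKernel a) :=
  (integrable_exp_neg_mul_abs ha).mono' (continuous_sigmoidKernel a).aestronglyMeasurable
    (ae_of_all _ (norm_sigmoidKernel_le ha.le))

lemma integrable_fourier_sigmoidKernel {a : ℂ} (ha : 0 < a.re) :
    Integrable (𝓕 (sigmoidKernel a)) := by
  have hσ (x : ℝ) : |2 * (sigmoid x * (1 - sigmoid x))| ≤ 1 := by
    rw [abs_le]
    constructor <;> nlinarith [sigmoid_pos x, sigmoid_lt_one x]
  refine Real.integrable_fourier_of_hasDerivAt_two (hasDerivAt_sigmoidKernel a)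
    (hasDerivAt_deriv_sigmoidKernel a) (integrable_sigmoidKernel ha) ?_ ?_
  · refine (integrable_sigmoidKernel ha).bdd_mul (c := ‖a‖) (by fun_prop)
      (ae_of_all _ fun x => ?_)
    rw [norm_mul, norm_real, norm_eq_abs]
    exact mul_le_of_le_one_right (norm_nonneg a) (abs_one_sub_two_mul_sigmoid_le x)
  · refine (integrable_sigmoidKernel ha).bdd_mul (c := ‖a‖ ^ 2 + ‖a‖) (by fun_prop)
      (ae_of_all _ fun x => ?_)
    refine (norm_sub_le _ _).trans (add_le_add ?_ ?_)
    · rw [norm_mul, norm_pow, norm_real, norm_eq_abs, abs_pow]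
      exact mul_le_of_le_one_right (by positivity) (pow_le_one₀ (abs_nonneg _)
        (abs_one_sub_two_mul_sigmoid_le x))
    · rw [norm_mul, norm_real, norm_eq_abs]
      exact mul_le_of_le_one_right (norm_nonneg a) (hσ x)

lemma fourier_sigmoidKernel (a : ℂ) (s : ℝ) :
    𝓕 (sigmoidKernel a) s = betaIntegral (a - 2 * π * I * s) (a + 2 * π * I * s) := by
  rw [Real.fourier_real_eq_integral_exp_smul, betaIntegral_eq_integral_sigmoid]
  congr 1 with x
  rw [smul_eq_mul, sigmoidKernel_eq_exp, ← Complex.exp_add,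
    ofReal_cpow_eq_exp (sigmoid_pos x), ofReal_cpow_eq_exp (sigmoid_pos (-x)), ← Complex.exp_add,
    log_sigmoid_neg]
  push_cast
  ring_nf

lemma Gamma_mul_Gamma_eq_mul_fourier_sigmoidKernel {a : ℂ} (ha : 0 < a.re) (t : ℝ) :
    Gamma (a + I * t) * Gamma (a - I * t) = Gamma (2 * a) * 𝓕 (sigmoidKernel a) (t / (2 * π)) := by
  have hu : 0 < (a - I * t).re := by simpa using ha
  have hv : 0 < (a + I * t).re := by simpa using ha
  have hs : 2 * π * I * ((t / (2 * π) : ℝ) : ℂ) = I * t := by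
    push_cast
    field_simp
  rw [fourier_sigmoidKernel, hs, mul_comm, Gamma_mul_Gamma_eq_betaIntegral hu hv]
  ring_nf

lemma fourier_fourier_sigmoidKernel {a : ℂ} (ha : 0 < a.re) (x : ℝ) :
    𝓕 (𝓕 (sigmoidKernel a)) x = sigmoidKernel a x := by
  rw [← sigmoidKernel_neg, ← (integrable_sigmoidKernel ha).fourierInv_fourier_eq
    (integrable_fourier_sigmoidKernel ha) (continuous_sigmoidKernel a).continuousAt,
    Real.fourierInv_eq_fourier_neg, neg_neg]

lemma sigmoidKernel_eq_inv (a : ℂ) (x : ℝ) :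
    sigmoidKernel a x = ((4 : ℂ) ^ a * ((cosh (x / 2) : ℝ) : ℂ) ^ (2 * a))⁻¹ := by
  rw [sigmoidKernel_eq_exp, ← Real.log_mul (sigmoid_pos x).ne' (sigmoid_pos (-x)).ne',
    sigmoid_mul_sigmoid_neg, show (4 : ℂ) = ((4 : ℝ) : ℂ) by norm_num,
    ofReal_cpow_eq_exp four_pos, ofReal_cpow_eq_exp (cosh_pos _), ← Complex.exp_add,
    ← Complex.exp_neg, Real.log_inv, Real.log_mul four_ne_zero (by positivity), Real.log_pow]
  push_cast
  ring_nf

theorem ramanujan_formula (a : ℂ) (ha : 0 < a.re) (ξ : ℝ) :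
    ∫ t : ℝ, Complex.Gamma (a + Complex.I * t) * Complex.Gamma (a - Complex.I * t) *
        Complex.exp (-Complex.I * ξ * t) =
      2 * Real.pi * Complex.Gamma (2 * a) /
        ((4 : ℂ) ^ a * ((Real.cosh (ξ / 2) : ℝ) : ℂ) ^ (2 * a)) := by
  set φ : ℝ → ℂ := fun s => cexp (↑(-2 * π * s * ξ) * I) • 𝓕 (sigmoidKernel a) s
  calc _ = ∫ t : ℝ, Gamma (2 * a) * φ (t / (2 * π)) := by
        congr 1 with t
        rw [Gamma_mul_Gamma_eq_mul_fourier_sigmoidKernel ha, mul_assoc]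
        simp only [φ, smul_eq_mul]
        rw [mul_comm (cexp _)]
        congr 3
        push_cast
        field_simp
    _ = Gamma (2 * a) * ((2 * π : ℝ) • 𝓕 (𝓕 (sigmoidKernel a)) ξ) := by
        rw [integral_const_mul, Measure.integral_comp_div, abs_of_pos two_pi_pos,
          Real.fourier_real_eq_integral_exp_smul]
    _ = _ := by
        rw [fourier_fourier_sigmoidKernel ha, sigmoidKernel_eq_inv, real_smul, div_eq_mul_inv]
        push_cast
        ring
end

section
/- For a complex a with Re(a) not zero or a negative integer, define I(a, ξ) = ∫_{-∞}^{∞} a Γ(a - it) Γ(a + it) e^{-itξ} dt for real ξ. Then I(a, ·) is twice differentiable in ξ and satisfies the ODE (d²/dξ²) I(a, ξ) - a² I(a, ξ) = -(a/(a+1)) I(a+1, ξ). -/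
open Complex Real MeasureTheory

/-!
Write `G_b(t) = Γ(b - it) Γ(b + it)`, so that `I(b, ξ) = ∫ b G_b(t) e^{-itξ} dt`. The functional
equation gives `G_{b+1}(t) = (b² + t²) G_b(t)`, and `|b² + t²| ≫ 1 + t²` as soon as `Re b ≠ 0`.
Shifting `a` to the half-plane `Re > 0`, where `|Γ(s)| ≤ Γ(Re s)`, therefore shows that `G_a` decays
faster than every power of `t`. So `I(a, ·)` may be differentiated twice under the integral sign,
which multiplies the integrand by `(-it)² = -t²`, and `-(t² + a²) a G_a = -a G_{a+1}` is the ODE.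
-/

noncomputable def gammaProd (b : ℂ) (t : ℝ) : ℂ :=
  Complex.Gamma (b - I * t) * Complex.Gamma (b + I * t)

lemma re_sub_I_mul_ofReal (b : ℂ) (t : ℝ) : (b - I * t).re = b.re := by simp

lemma re_add_I_mul_ofReal (b : ℂ) (t : ℝ) : (b + I * t).re = b.re := by simp

lemma norm_Gamma_le_Gamma_re {s : ℂ} (hs : 0 < s.re) : ‖Complex.Gamma s‖ ≤ Real.Gamma s.re := by
  rw [Complex.Gamma_eq_integral hs, Real.Gamma_eq_integral hs, Complex.GammaIntegral]
  refine (norm_integral_le_integral_norm _).trans_eq (setIntegral_congr_fun measurableSet_Ioi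
    fun x hx => ?_)
  rw [norm_mul, norm_real, Real.norm_of_nonneg (Real.exp_pos _).le,
    norm_cpow_eq_rpow_re_of_pos hx]
  simp

lemma norm_gammaProd_le {b : ℂ} (hb : 0 < b.re) (t : ℝ) :
    ‖gammaProd b t‖ ≤ Real.Gamma b.re ^ 2 := by
  have h₁ := norm_Gamma_le_Gamma_re (s := b - I * t) (by rwa [re_sub_I_mul_ofReal])
  have h₂ := norm_Gamma_le_Gamma_re (s := b + I * t) (by rwa [re_add_I_mul_ofReal])
  rw [re_sub_I_mul_ofReal] at h₁
  rw [re_add_I_mul_ofReal] at h₂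
  rw [gammaProd, norm_mul, sq]
  exact mul_le_mul h₁ h₂ (norm_nonneg _) ((norm_nonneg _).trans h₁)

lemma gammaProd_add_one {b : ℂ} (hb : b.re ≠ 0) (t : ℝ) :
    gammaProd (b + 1) t = (b ^ 2 + t ^ 2) * gammaProd b t := by
  have h₁ : b - I * t ≠ 0 := fun h => hb (by simpa using congrArg re h)
  have h₂ : b + I * t ≠ 0 := fun h => hb (by simpa using congrArg re h)
  rw [gammaProd, gammaProd, add_sub_right_comm, add_right_comm, Complex.Gamma_add_one _ h₁,
    Complex.Gamma_add_one _ h₂]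
  linear_combination (-(t : ℂ) ^ 2 * Complex.Gamma (b - I * t) * Complex.Gamma (b + I * t)) * I_sq

lemma abs_re_mul_one_add_abs_le (z : ℂ) (t : ℝ) :
    |z.re| * (1 + |t|) ≤ (1 + |z.re| + ‖z‖) * ‖z + I * t‖ := by
  have hre : |z.re| ≤ ‖z + I * t‖ := by simpa using abs_re_le_norm (z + I * t)
  have him : |t| ≤ ‖z + I * t‖ + ‖z‖ := by
    simpa using norm_sub_le (z + I * t) z
  nlinarith [abs_re_le_norm z, abs_nonneg z.re, abs_nonneg t]

lemma sq_re_mul_one_add_sq_le (b : ℂ) (t : ℝ) :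
    b.re ^ 2 * (1 + t ^ 2) ≤ (1 + |b.re| + ‖b‖) ^ 2 * ‖b ^ 2 + t ^ 2‖ := by
  have hfactor : b ^ 2 + (t : ℂ) ^ 2 = (b + I * t) * (b + I * ↑(-t)) := by
    push_cast; linear_combination (t : ℂ) ^ 2 * I_sq
  have h₁ := abs_re_mul_one_add_abs_le b t
  have h₂ := abs_re_mul_one_add_abs_le b (-t)
  rw [abs_neg] at h₂
  calc b.re ^ 2 * (1 + t ^ 2) ≤ (|b.re| * (1 + |t|)) * (|b.re| * (1 + |t|)) := by
        nlinarith [sq_abs b.re, sq_abs t, abs_nonneg t]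
    _ ≤ _ := by
        rw [hfactor, norm_mul]
        nlinarith [mul_le_mul h₁ h₂ (by positivity) (by positivity)]

lemma gammaProd_decay_of_pos {a : ℂ} (ha : ∀ m : ℕ, a.re ≠ -m) {n : ℕ} (hn : 0 < a.re + n) :
    ∃ C, ∀ t : ℝ, (1 + t ^ 2) ^ n * ‖gammaProd a t‖ ≤ C := by
  induction n generalizing a with
  | zero => exact ⟨_, fun t => by simpa using norm_gammaProd_le (by simpa using hn) t⟩
  | succ n ih =>
    have ha₁ : ∀ m : ℕ, (a + 1).re ≠ -m := fun m h => ha (m + 1) (by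
      rw [add_re, one_re] at h; push_cast; linarith)
    obtain ⟨C, hC⟩ := ih ha₁ (by rw [add_re, one_re]; push_cast at hn; linarith)
    have hre : a.re ≠ 0 := by simpa using ha 0
    set K := (1 + |a.re| + ‖a‖) ^ 2
    refine ⟨K * C / a.re ^ 2, fun t => (le_div_iff₀' (by positivity)).2 ?_⟩
    calc a.re ^ 2 * ((1 + t ^ 2) ^ (n + 1) * ‖gammaProd a t‖)
        = (1 + t ^ 2) ^ n * ‖gammaProd a t‖ * (a.re ^ 2 * (1 + t ^ 2)) := by ring
      _ ≤ (1 + t ^ 2) ^ n * ‖gammaProd a t‖ * (K * ‖a ^ 2 + t ^ 2‖) :=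
        mul_le_mul_of_nonneg_left (sq_re_mul_one_add_sq_le a t) (by positivity)
      _ = K * ((1 + t ^ 2) ^ n * ‖gammaProd (a + 1) t‖) := by
        rw [gammaProd_add_one hre, norm_mul]; ring
      _ ≤ K * C := by gcongr; exact hC t

lemma gammaProd_decay {a : ℂ} (ha : ∀ m : ℕ, a.re ≠ -m) (k : ℕ) :
    ∃ C, ∀ t : ℝ, (1 + t ^ 2) ^ k * ‖gammaProd a t‖ ≤ C := by
  obtain ⟨C, hC⟩ := gammaProd_decay_of_pos ha (n := k + ⌈|a.re|⌉₊ + 1) (by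
    push_cast; linarith [Nat.le_ceil |a.re|, neg_abs_le a.re, (k.cast_nonneg : (0 : ℝ) ≤ k)])
  refine ⟨C, fun t => le_trans ?_ (hC t)⟩
  gcongr
  · nlinarith [sq_nonneg t]
  · omega

lemma continuous_gammaProd {a : ℂ} (ha : ∀ m : ℕ, a.re ≠ -m) : Continuous (gammaProd a) := by
  have hGamma : ∀ s : ℂ, s.re = a.re → ContinuousAt Complex.Gamma s := fun s hs =>
    (differentiableAt_Gamma s fun m h => ha m (by simpa [← hs] using congrArg re h)).continuousAt
  refine continuous_iff_continuousAt.2 fun t => ContinuousAt.mul ?_ ?_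
  · exact (hGamma _ (re_sub_I_mul_ofReal a t)).comp (f := fun t : ℝ => a - I * t) (by fun_prop)
  · exact (hGamma _ (re_add_I_mul_ofReal a t)).comp (f := fun t : ℝ => a + I * t) (by fun_prop)

noncomputable def fourierMoment (f : ℝ → ℂ) (n : ℕ) (ξ : ℝ) : ℂ :=
  ∫ t : ℝ, (-I * t) ^ n * f t * cexp (-I * t * ξ)

section fourierMoment

variable {f : ℝ → ℂ} {n : ℕ}

lemma norm_fourierMoment_integrand (f : ℝ → ℂ) (n : ℕ) (t ξ : ℝ) :
    ‖(-I * t) ^ n * f t * cexp (-I * t * ξ)‖ = |t| ^ n * ‖f t‖ := by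
  rw [norm_mul, norm_mul, norm_pow, norm_exp]
  simp

lemma aestronglyMeasurable_fourierMoment_integrand (hf : AEStronglyMeasurable f) (n : ℕ) (ξ : ℝ) :
    AEStronglyMeasurable fun t : ℝ => (-I * t) ^ n * f t * cexp (-I * t * ξ) :=
  ((Continuous.aestronglyMeasurable (by fun_prop)).mul hf).mul
    (Continuous.aestronglyMeasurable (by fun_prop))

lemma integrable_fourierMoment_integrand (hf : AEStronglyMeasurable f)
    (hn : Integrable fun t => |t| ^ n * ‖f t‖) (ξ : ℝ) :
    Integrable fun t : ℝ => (-I * t) ^ n * f t * cexp (-I * t * ξ) :=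
  hn.mono' (aestronglyMeasurable_fourierMoment_integrand hf n ξ)
    (.of_forall fun t => (norm_fourierMoment_integrand f n t ξ).le)

lemma hasDerivAt_fourierMoment (hf : AEStronglyMeasurable f)
    (hn : Integrable fun t => |t| ^ n * ‖f t‖) (hn₁ : Integrable fun t => |t| ^ (n + 1) * ‖f t‖)
    (ξ : ℝ) : HasDerivAt (fourierMoment f n) (fourierMoment f (n + 1) ξ) ξ := by
  refine (hasDerivAt_integral_of_dominated_loc_of_deriv_le Filter.univ_mem
    (.of_forall (aestronglyMeasurable_fourierMoment_integrand hf n))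
    (integrable_fourierMoment_integrand hf hn ξ)
    (aestronglyMeasurable_fourierMoment_integrand hf (n + 1) ξ)
    (.of_forall fun t ξ' _ => (norm_fourierMoment_integrand f (n + 1) t ξ').le) hn₁
    (.of_forall fun t ξ' _ => ?_)).2
  have hexp : HasDerivAt (fun ξ : ℝ => cexp (-I * t * ξ)) (cexp (-I * t * ξ') * (-I * t)) ξ' := by
    simpa using ((hasDerivAt_id (ξ' : ℂ)).const_mul (-I * t)).cexp.comp_ofReal
  exact (hexp.const_mul ((-I * t) ^ n * f t)).congr_deriv (by ring)

lemma integrable_abs_pow_mul_of_decay (hf : AEStronglyMeasurable f) {C : ℝ}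
    (hC : ∀ t, (1 + t ^ 2) ^ (n + 1) * ‖f t‖ ≤ C) :
    Integrable fun t => |t| ^ n * ‖f t‖ := by
  refine (integrable_inv_one_add_sq.const_mul C).mono'
    (((continuous_abs.pow n).aestronglyMeasurable).mul hf.norm) (.of_forall fun t => ?_)
  have ht : |t| ≤ 1 + t ^ 2 := by nlinarith [sq_abs t, sq_nonneg (|t| - 1)]
  rw [Real.norm_of_nonneg (by positivity), ← div_eq_mul_inv, le_div_iff₀ (by positivity)]
  calc |t| ^ n * ‖f t‖ * (1 + t ^ 2) ≤ (1 + t ^ 2) ^ n * ‖f t‖ * (1 + t ^ 2) := by gcongr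
    _ = (1 + t ^ 2) ^ (n + 1) * ‖f t‖ := by ring
    _ ≤ C := hC t

end fourierMoment

lemma neg_sq_mul_sub_sq_mul_gammaProd {a : ℂ} (ha : a.re ≠ 0) (ha₁ : a + 1 ≠ 0) (t : ℝ) :
    (-I * t) ^ 2 * (a * gammaProd a t) - a ^ 2 * (a * gammaProd a t) =
      -(a / (a + 1)) * ((a + 1) * gammaProd (a + 1) t) := by
  rw [gammaProd_add_one ha, ← mul_assoc (-(a / (a + 1))), neg_mul (a / (a + 1)),
    div_mul_cancel₀ _ ha₁]
  linear_combination ((t : ℂ) ^ 2 * a * gammaProd a t) * I_sq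

theorem ode_for_I (a : ℂ) (ha : ∀ n : ℕ, a.re ≠ -n)
    (I : ℂ → ℝ → ℂ)
    (hI : ∀ b : ℂ, ∀ ξ : ℝ, I b ξ =
      ∫ t : ℝ, b * Complex.Gamma (b - Complex.I * t) * Complex.Gamma (b + Complex.I * t) *
        Complex.exp (-Complex.I * t * ξ)) :
    Differentiable ℝ (I a) ∧ Differentiable ℝ (deriv (I a)) ∧
      ∀ ξ : ℝ, deriv (deriv (I a)) ξ - a ^ 2 * I a ξ = -(a / (a + 1)) * I (a + 1) ξ := by
  have hre : a.re ≠ 0 := by simpa using ha 0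
  have ha₁ : a + 1 ≠ 0 := fun h => ha 1 (by simpa [eq_neg_iff_add_eq_zero] using congrArg re h)
  set f : ℝ → ℂ := fun t => a * gammaProd a t
  have hf : AEStronglyMeasurable f :=
    (continuous_const.mul (continuous_gammaProd ha)).aestronglyMeasurable
  have hmoment (n : ℕ) : Integrable fun t => |t| ^ n * ‖f t‖ := by
    obtain ⟨C, hC⟩ := gammaProd_decay ha (n + 1)
    refine integrable_abs_pow_mul_of_decay hf (C := ‖a‖ * C) fun t => ?_
    simpa [f, norm_mul, mul_left_comm] using mul_le_mul_of_nonneg_left (hC t) (norm_nonneg a)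
  have hIa : I a = fourierMoment f 0 := by
    ext ξ; simp [hI, fourierMoment, f, gammaProd, mul_assoc]
  have hderiv (n : ℕ) := hasDerivAt_fourierMoment hf (hmoment n) (hmoment (n + 1))
  have hderiv₁ : deriv (I a) = fourierMoment f 1 := by
    ext ξ; rw [hIa]; exact (hderiv 0 ξ).deriv
  refine ⟨hIa ▸ fun ξ => (hderiv 0 ξ).differentiableAt,
    hderiv₁ ▸ fun ξ => (hderiv 1 ξ).differentiableAt, fun ξ => ?_⟩
  have hint (n : ℕ) := integrable_fourierMoment_integrand hf (hmoment n) ξ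
  rw [hderiv₁, (hderiv 1 ξ).deriv, hIa, hI, fourierMoment, fourierMoment, ← integral_const_mul,
    ← integral_sub (hint 2) ((hint 0).const_mul _), ← integral_const_mul]
  congr 1 with t
  have key := neg_sq_mul_sub_sq_mul_gammaProd hre ha₁ t
  simp only [f, gammaProd, pow_zero, one_mul] at key ⊢
  linear_combination cexp (-Complex.I * t * ξ) * key
end
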